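/- For every k ≥ 2, the number of copies of the matching M_k in the graph K_{k-1} + (K₂ ∪ I_{k-1}) equals (k-1)!, where I_{k-1} is an independent set on k-1 vertices, K₂ a single edge, and + denotes the join. -/

import Mathlib

open SimpleGraph

/-- The join `G + H` of two graphs: their disjoint union together with all edges between them. -/
def joinG {α β : Type*} (G : SimpleGraph α) (H : SimpleGraph β) : SimpleGraph (α ⊕ β) where
  Adj u v := match u, v with
    | Sum.inl a, Sum.inl b => G.Adj a b
    | Sum.inr a, Sum.inr b => H.Adj a b
    | _, _ => True
  symm := ⟨by
    intro u v h
    cases u <;> cases v <;> first | exact G.adj_symm h | exact H.adj_symm h | trivial⟩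
  loopless := ⟨by
    intro u
    cases u with
    | inl a => exact G.irrefl
    | inr a => exact H.irrefl⟩

/-- The number of matchings of size `k` (sets of `k` pairwise vertex-disjoint edges) in `G`. -/
noncomputable def matchingCount {V : Type*} (G : SimpleGraph V) (k : ℕ) : ℕ :=
  Set.ncard {s : Finset (Sym2 V) | s.card = k ∧ ↑s ⊆ G.edgeSet ∧
    ∀ e ∈ s, ∀ f ∈ s, e ≠ f → ∀ v, v ∈ e → v ∉ f}

/-!
In a graph on `2k` vertices a matching with `k` edges covers every vertex. In
`K_{k-1} + (K₂ ∪ I_{k-1})` the `k - 1` independent vertices can only be matched into the clique,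
so they use up all of it, and the two vertices of `K₂` must be matched to each other. Hence the
perfect matchings are exactly the sets `{K₂} ∪ {{σ j, j} | j}` for a bijection `σ` from the
independent set onto the clique, and there are `(k-1)!` of them.
-/

open Finset Sum

section Matchings

variable {V : Type*}

def matchings (G : SimpleGraph V) (k : ℕ) : Set (Finset (Sym2 V)) :=
  {s | s.card = k ∧ ↑s ⊆ G.edgeSet ∧ ∀ e ∈ s, ∀ f ∈ s, e ≠ f → ∀ v, v ∈ e → v ∉ f}

theorem matchingCount_eq_ncard (G : SimpleGraph V) (k : ℕ) :
    matchingCount G k = (matchings G k).ncard := rfl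

theorem matchingCount_zero (G : SimpleGraph V) : matchingCount G 0 = 1 := by
  rw [matchingCount_eq_ncard, Set.ncard_eq_one]
  refine ⟨∅, Set.eq_singleton_iff_unique_mem.mpr ⟨by simp [matchings], ?_⟩⟩
  exact fun s hs => Finset.card_eq_zero.mp hs.1

variable {G : SimpleGraph V} {k : ℕ} {s : Finset (Sym2 V)}

theorem eq_of_mem_of_mem_matchings (hs : s ∈ matchings G k) {e f : Sym2 V} (he : e ∈ s)
    (hf : f ∈ s) {v : V} (hve : v ∈ e) (hvf : v ∈ f) : e = f := by
  by_contra hne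
  exact hs.2.2 e he f hf hne v hve hvf

theorem exists_mem_of_mem_matchings [Fintype V] (hs : s ∈ matchings G k)
    (hV : Fintype.card V = 2 * k) (v : V) : ∃ e ∈ s, v ∈ e := by
  classical
  have ⟨hcard, hsub, _⟩ := hs
  have hdisj : (s : Set (Sym2 V)).PairwiseDisjoint Sym2.toFinset := by
    intro e he f hf hne
    exact Finset.disjoint_left.mpr fun v hve hvf =>
      hne (eq_of_mem_of_mem_matchings hs he hf (Sym2.mem_toFinset.mp hve)
        (Sym2.mem_toFinset.mp hvf))
  have hunion : s.biUnion Sym2.toFinset = univ := by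
    refine eq_univ_of_card _ ?_
    rw [card_biUnion hdisj, sum_congr rfl fun e he =>
      Sym2.card_toFinset_of_not_isDiag e (G.not_isDiag_of_mem_edgeSet (hsub he))]
    simp [hV, hcard, mul_comm]
  have hv : v ∈ s.biUnion Sym2.toFinset := hunion ▸ mem_univ v
  simpa using hv

end Matchings

section Join

variable {α β : Type*} {G : SimpleGraph α} {H : SimpleGraph β}

@[simp] theorem joinG_adj_inl_inl {a b : α} : (joinG G H).Adj (inl a) (inl b) ↔ G.Adj a b :=
  Iff.rfl

@[simp] theorem joinG_adj_inr_inr {a b : β} : (joinG G H).Adj (inr a) (inr b) ↔ H.Adj a b :=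
  Iff.rfl

@[simp] theorem joinG_adj_inl_inr {a : α} {b : β} : (joinG G H).Adj (inl a) (inr b) :=
  trivial

@[simp] theorem joinG_adj_inr_inl {a : β} {b : α} : (joinG G H).Adj (inr a) (inl b) :=
  trivial

end Join

section PermMatching

variable {n : ℕ}

abbrev cliqueJoinEdgeIndep (n : ℕ) : SimpleGraph (Fin n ⊕ (Fin 2 ⊕ Fin n)) :=
  joinG ⊤ ((⊤ : SimpleGraph (Fin 2)) ⊕g (⊥ : SimpleGraph (Fin n)))

def permMatching (σ : Equiv.Perm (Fin n)) : Finset (Sym2 (Fin n ⊕ (Fin 2 ⊕ Fin n))) :=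
  insert s(inr (inl 0), inr (inl 1)) (univ.image fun j => s(inl (σ j), inr (inr j)))

theorem mem_permMatching {σ : Equiv.Perm (Fin n)} {e : Sym2 (Fin n ⊕ (Fin 2 ⊕ Fin n))} :
    e ∈ permMatching σ ↔
      e = s(inr (inl 0), inr (inl 1)) ∨ ∃ j, s(inl (σ j), inr (inr j)) = e := by
  simp [permMatching]

theorem card_permMatching (σ : Equiv.Perm (Fin n)) : (permMatching σ).card = n + 1 := by
  rw [permMatching, card_insert_of_notMem (by simp), card_image_of_injective _ (by
    intro j j' h; simpa using h), card_univ, Fintype.card_fin]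

theorem permMatching_mem_matchings (σ : Equiv.Perm (Fin n)) :
    permMatching σ ∈ matchings (cliqueJoinEdgeIndep n) (n + 1) := by
  refine ⟨card_permMatching σ, ?_, ?_⟩
  · intro e he
    rcases mem_permMatching.mp he with rfl | ⟨j, rfl⟩ <;> simp
  · intro e he f hf hne v hve hvf
    rcases mem_permMatching.mp he with rfl | ⟨j, rfl⟩ <;>
      rcases mem_permMatching.mp hf with rfl | ⟨j', rfl⟩ <;>
      simp only [Sym2.mem_iff] at hve hvf <;>
      rcases hve with rfl | rfl <;> rcases hvf with h | h <;> simp_all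

theorem permMatching_injective : Function.Injective (permMatching (n := n)) := by
  intro σ τ h
  refine Equiv.ext fun j => ?_
  have hj : s(inl (σ j), inr (inr j)) ∈ permMatching τ :=
    h ▸ mem_permMatching.mpr (.inr ⟨j, rfl⟩)
  rw [mem_permMatching] at hj
  simpa [eq_comm] using hj

theorem exists_permMatching_eq {s : Finset (Sym2 (Fin n ⊕ (Fin 2 ⊕ Fin n)))}
    (hs : s ∈ matchings (cliqueJoinEdgeIndep n) (n + 1)) : ∃ σ, permMatching σ = s := by
  have ⟨hcard, hsub, _⟩ := hs
  have hcover := exists_mem_of_mem_matchings hs (by simp; ring)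
  have hindep : ∀ j, ∃ a, s(inl a, inr (inr j)) ∈ s := by
    intro j
    obtain ⟨e, he, hj⟩ := hcover (inr (inr j))
    obtain ⟨w, rfl⟩ := Sym2.mem_iff_exists.mp hj
    have hadj : (cliqueJoinEdgeIndep n).Adj _ w := hsub he
    rcases w with a | i | j' <;> simp at hadj
    exact ⟨a, Sym2.eq_swap ▸ he⟩
  choose f hf using hindep
  have hf_inj : f.Injective := fun j j' h => by
    have := eq_of_mem_of_mem_matchings hs (hf j) (hf j') (v := inl (f j)) (by simp) (by simp [h])
    simp only [Sym2.eq_iff, inl.injEq, inr.injEq, reduceCtorEq, and_false, or_false] at this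
    exact this.2
  let σ := Equiv.ofBijective f (Finite.injective_iff_bijective.mp hf_inj)
  have hK₂ : s(inr (inl 0), inr (inl 1)) ∈ s := by
    obtain ⟨e, he, h0⟩ := hcover (inr (inl 0))
    obtain ⟨w, rfl⟩ := Sym2.mem_iff_exists.mp h0
    have hadj : (cliqueJoinEdgeIndep n).Adj _ w := hsub he
    rcases w with a | i | j
    · obtain ⟨j, rfl⟩ := σ.surjective a
      simpa using eq_of_mem_of_mem_matchings hs he (hf j) (v := inl (σ j)) (by simp)
        (Sym2.mem_mk_left _ _)
    · fin_cases i
      · simp at hadj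
      · exact he
    · simp at hadj
  refine ⟨σ, eq_of_subset_of_card_le ?_ (by rw [hcard, card_permMatching])⟩
  intro e he
  rcases mem_permMatching.mp he with rfl | ⟨j, rfl⟩
  exacts [hK₂, hf j]

theorem matchings_cliqueJoinEdgeIndep :
    matchings (cliqueJoinEdgeIndep n) (n + 1) = Set.range permMatching :=
  Set.ext fun _ => ⟨exists_permMatching_eq, fun ⟨σ, hσ⟩ => hσ ▸ permMatching_mem_matchings σ⟩

theorem matchingCount_cliqueJoinEdgeIndep :
    matchingCount (cliqueJoinEdgeIndep n) (n + 1) = n.factorial := by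
  rw [matchingCount_eq_ncard, matchings_cliqueJoinEdgeIndep,
    Set.ncard_range_of_injective permMatching_injective, Nat.card_perm, Nat.card_fin]

end PermMatching

theorem stmt_17_general (k : ℕ) :
    matchingCount
      (joinG (⊤ : SimpleGraph (Fin (k - 1)))
        ((⊤ : SimpleGraph (Fin 2)) ⊕g (⊥ : SimpleGraph (Fin (k - 1))))) k =
      (k - 1).factorial := by
  cases k with
  | zero => exact matchingCount_zero _
  | succ n => exact matchingCount_cliqueJoinEdgeIndep

/-- For every `k ≥ 2`, the number of copies of `M_k` in `K_{k-1} + (K₂ ∪ I_{k-1})` equals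
`(k-1)!`. -/
theorem stmt_17 (k : ℕ) (hk : 2 ≤ k) :
    matchingCount
      (joinG (⊤ : SimpleGraph (Fin (k - 1)))
        ((⊤ : SimpleGraph (Fin 2)) ⊕g (⊥ : SimpleGraph (Fin (k - 1))))) k =
      (k - 1).factorial :=
  stmt_17_general k
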